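/- For c_l = c_g = c ≠ 0, c ≠ 1/2, c ≠ 1, the expected change in the convergence indicator for χ = 0 equals D(c) := (1/(2c²))·[(1-2c)²·ln((1-2c)²) - 2(1-c)²·ln((1-c)²)] - 3, i.e., E[ln((1 - c·r - c·s)²)] = D(c) where r, s are independent uniform on [0,1]. -/

import Mathlib

open MeasureTheory ProbabilityTheory

open Set intervalIntegral Filter in
private lemma log_II (a b : ℝ) : IntervalIntegrable Real.log volume a b := by
  have hpos : ∀ b : ℝ, 0 < b → IntervalIntegrable Real.log volume 0 b := by
    intro b hb
    rw [intervalIntegrable_iff_integrableOn_Ioc_of_le hb.le]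
    have hbound : IntervalIntegrable (fun x : ℝ => 2 * x ^ (-(1/2) : ℝ) + |Real.log b|)
        volume 0 b :=
      ((intervalIntegral.intervalIntegrable_rpow' (by norm_num)).const_mul 2).add
        intervalIntegrable_const
    refine Integrable.mono' ((intervalIntegrable_iff_integrableOn_Ioc_of_le hb.le).mp hbound)
      Real.measurable_log.aestronglyMeasurable ?_
    filter_upwards [ae_restrict_mem measurableSet_Ioc] with x hx
    have hx0 : 0 < x := hx.1
    rcases le_or_gt x 1 with h1 | h1
    · have hlog : Real.log x ≤ 0 := Real.log_nonpos hx0.le h1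
      have key : -Real.log x ≤ 2 * x ^ (-(1/2) : ℝ) := by
        have h2 : Real.log (x ^ (-(1/2) : ℝ)) = -(1/2) * Real.log x := Real.log_rpow hx0 _
        have h3 : Real.log (x ^ (-(1/2) : ℝ)) ≤ x ^ (-(1/2) : ℝ) := by
          have := Real.log_le_sub_one_of_pos (Real.rpow_pos_of_pos hx0 (-(1/2)))
          linarith
        nlinarith
      have habs : ‖Real.log x‖ = -Real.log x := by
        rw [Real.norm_eq_abs, abs_of_nonpos hlog]
      rw [habs]
      have := abs_nonneg (Real.log b)
      linarith
    · have hxb : Real.log x ≤ |Real.log b| :=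
        le_trans (Real.log_le_log hx0 hx.2) (le_abs_self _)
      have hnn : (0:ℝ) ≤ 2 * x ^ (-(1/2) : ℝ) := by positivity
      have habs : ‖Real.log x‖ = Real.log x := by
        rw [Real.norm_eq_abs, abs_of_nonneg (Real.log_nonneg h1.le)]
      linarith [habs.le]
  set M : ℝ := max (max |a| |b|) 1 with hM
  have hM1 : (1:ℝ) ≤ M := le_max_right _ _
  have hMpos : (0:ℝ) < M := lt_of_lt_of_le one_pos hM1
  have hposM := hpos M hMpos
  have hneg : IntervalIntegrable Real.log volume (-M) 0 := by
    have h1 := (IntervalIntegrable.iff_comp_neg enorm_ne_top).mp hposM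
    have h2 : (fun x : ℝ => Real.log (-x)) = Real.log := funext Real.log_neg_eq_log
    rw [h2] at h1
    simpa using h1.symm
  have htot : IntervalIntegrable Real.log volume (-M) M := hneg.trans hposM
  refine htot.mono_set ?_
  have ha : |a| ≤ M := le_trans (le_max_left _ _) (le_max_left _ _)
  have hb : |b| ≤ M := le_trans (le_max_right _ _) (le_max_left _ _)
  apply Set.uIcc_subset_uIcc
  · rw [Set.uIcc_of_le (by linarith)]
    exact ⟨(abs_le.mp ha).1, (abs_le.mp ha).2⟩
  · rw [Set.uIcc_of_le (by linarith)]
    exact ⟨(abs_le.mp hb).1, (abs_le.mp hb).2⟩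

private lemma integral_log' (a b : ℝ) :
    ∫ x in a..b, Real.log x = b * Real.log b - a * Real.log a - b + a := by
  have key : ∀ b : ℝ, 0 < b → ∫ x in (0:ℝ)..b, Real.log x = b * Real.log b - b := by
    intro b hb
    have h := intervalIntegral.integral_eq_sub_of_hasDeriv_right_of_le hb.le
      (f := fun x => x * Real.log x - x) (f' := Real.log)
      ((Real.continuous_mul_log.sub continuous_id).continuousOn)
      (fun x hx => by
        have h := (Real.hasDerivAt_mul_log (ne_of_gt hx.1)).sub (hasDerivAt_id x)
        simpa [Pi.sub_def] using h.hasDerivWithinAt) (log_II 0 b)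
    rw [h]
    simp
  have key0 : ∀ b : ℝ, ∫ x in (0:ℝ)..b, Real.log x = b * Real.log b - b := by
    intro b
    rcases lt_trichotomy b 0 with hb | rfl | hb
    · have h1 : ∫ x in (0:ℝ)..b, Real.log x = ∫ x in (0:ℝ)..b, Real.log (-x) :=
        intervalIntegral.integral_congr fun x _ => (Real.log_neg_eq_log x).symm
      rw [h1, intervalIntegral.integral_comp_neg (fun x => Real.log x), neg_zero,
        intervalIntegral.integral_symm 0 (-b), key (-b) (by linarith),
        ← Real.log_neg_eq_log b]
      ring
    · simp
    · exact key b hb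
  have hadd := intervalIntegral.integral_add_adjacent_intervals (log_II a 0) (log_II 0 b)
  rw [← hadd, intervalIntegral.integral_symm 0 a, key0 a, key0 b]
  ring

private noncomputable def phi (u : ℝ) : ℝ := u * Real.log u - u

private noncomputable def Phi (u : ℝ) : ℝ := u ^ 2 / 2 * Real.log u - 3 * u ^ 2 / 4

private lemma continuous_phi : Continuous phi := by
  unfold phi
  exact Real.continuous_mul_log.sub continuous_id

open Filter in
private lemma hasDerivAt_Phi (u : ℝ) : HasDerivAt Phi (phi u) u := by
  unfold Phi phi
  rcases eq_or_ne u 0 with rfl | hu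
  · have h1 : HasDerivAt (fun u : ℝ => u ^ 2 / 2 * Real.log u) 0 0 := by
      rw [hasDerivAt_iff_tendsto_slope]
      have h3 := (Real.continuous_mul_log.tendsto 0).div_const 2
      have h2 : Tendsto (fun u : ℝ => u * Real.log u / 2) (nhdsWithin 0 {(0:ℝ)}ᶜ) (nhds 0) := by
        have : (0 : ℝ) * Real.log 0 / 2 = 0 := by simp
        rw [this] at h3
        exact h3.mono_left nhdsWithin_le_nhds
      refine h2.congr' ?_
      filter_upwards [self_mem_nhdsWithin] with u hu
      have hu' : (u:ℝ) ≠ 0 := hu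
      rw [slope_def_field]
      field_simp
      ring
    have h4 : HasDerivAt (fun u : ℝ => 3 * u ^ 2 / 4) 0 0 := by
      have := ((hasDerivAt_pow 2 (0:ℝ)).const_mul 3).div_const 4
      simpa using this
    have h5 := h1.sub h4
    simpa [Pi.sub_def] using h5
  · have h1 : HasDerivAt (fun u : ℝ => u ^ 2 / 2 * Real.log u)
        (u * Real.log u + u / 2) u := by
      have h := ((hasDerivAt_pow 2 u).div_const 2).mul (Real.hasDerivAt_log hu)
      refine h.congr_deriv ?_
      field_simp
      ring
    have h4 : HasDerivAt (fun u : ℝ => 3 * u ^ 2 / 4) (3 * u / 2) u := by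
      have h := ((hasDerivAt_pow 2 u).const_mul 3).div_const 4
      refine h.congr_deriv ?_
      ring
    have h5 := h1.sub h4
    refine h5.congr_deriv ?_
    ring

private lemma integral_phi (p q : ℝ) : ∫ u in p..q, phi u = Phi q - Phi p :=
  intervalIntegral.integral_eq_sub_of_hasDerivAt (fun u _ => hasDerivAt_Phi u)
    (continuous_phi.intervalIntegrable p q)

private noncomputable def gg (c t : ℝ) : ℝ := 2 * Real.log (1 - c * t)

private lemma gg_intervalIntegrable (c a b : ℝ) : IntervalIntegrable (gg c) volume a b := by
  by_cases hc : c = 0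
  · subst hc
    unfold gg
    simp only [zero_mul, sub_zero]
    exact intervalIntegrable_const
  · have h3 := (log_II (1 - c * a) (1 - c * b)).comp_sub_left 1
    have h4 := h3.comp_mul_left enorm_ne_top enorm_ne_top (c := c)
    have h5 := h4.const_mul 2
    have e1 : (1 - (1 - c * a)) / c = a := by field_simp; ring
    have e2 : (1 - (1 - c * b)) / c = b := by field_simp; ring
    rw [e1, e2] at h5
    exact h5

private lemma gg_integral (c : ℝ) (hc0 : c ≠ 0) (p q : ℝ) :
    ∫ t in p..q, gg c t = (2 / c) * phi (1 - c * p) - (2 / c) * phi (1 - c * q) := by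
  unfold gg
  rw [intervalIntegral.integral_const_mul,
    intervalIntegral.integral_comp_sub_mul Real.log hc0 1, integral_log', smul_eq_mul]
  unfold phi
  field_simp
  ring

/-- for `χ = 0` and `c_l = c_g = c` the expected one-step change
of the convergence indicator equals
`D(c) = (1/(2c²))·[(1-2c)²·ln((1-2c)²) - 2(1-c)²·ln((1-c)²)] - 3`. -/
theorem stmt11 {Ω : Type*} [MeasureSpace Ω] [IsProbabilityMeasure (ℙ : Measure Ω)]
    (r s : Ω → ℝ) (hmr : Measurable r) (hms : Measurable s)
    (hind : IndepFun r s ℙ)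
    (hr : Measure.map r ℙ = volume.restrict (Set.Icc (0:ℝ) 1))
    (hs : Measure.map s ℙ = volume.restrict (Set.Icc (0:ℝ) 1))
    (c : ℝ) (hc0 : c ≠ 0) (hc2 : c ≠ 1/2) (hc1 : c ≠ 1) :
    ∫ ω, Real.log ((1 - c * r ω - c * s ω) ^ 2) ∂ℙ
      = (1 / (2 * c ^ 2)) *
          ((1 - 2 * c) ^ 2 * Real.log ((1 - 2 * c) ^ 2)
            - 2 * (1 - c) ^ 2 * Real.log ((1 - c) ^ 2)) - 3 := by
  have hgm : Measurable (fun p : ℝ × ℝ => gg c (p.1 + p.2)) := by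
    unfold gg
    exact (Real.measurable_log.comp
      (measurable_const.sub ((measurable_fst.add measurable_snd).const_mul c))).const_mul 2
  set μ : Measure ℝ := volume.restrict (Set.Icc (0:ℝ) 1) with hμdef
  have hmap : Measure.map (fun ω => (r ω, s ω)) ℙ = μ.prod μ := by
    have h := (ProbabilityTheory.indepFun_iff_map_prod_eq_prod_map_map
      hmr.aemeasurable hms.aemeasurable).mp hind
    rw [h, hr, hs]
  have hf_asm : AEStronglyMeasurable (fun p : ℝ × ℝ => gg c (p.1 + p.2)) (μ.prod μ) :=
    hgm.aestronglyMeasurable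
  have habs : IntervalIntegrable (fun t => |gg c t|) volume 0 2 :=
    (gg_intervalIntegrable c 0 2).abs
  have hfib : ∀ x : ℝ, Integrable (fun y => gg c (x + y)) μ := by
    intro x
    have h := (gg_intervalIntegrable c x (x + 1)).comp_add_left x
    have h' : IntervalIntegrable (fun y => gg c (x + y)) volume 0 1 := by
      simpa using h
    rw [hμdef]
    exact (intervalIntegrable_iff_integrableOn_Icc_of_le (by norm_num)).mp h'
  have hC : ∀ x ∈ Set.Icc (0:ℝ) 1,
      (∫ y, ‖gg c (x + y)‖ ∂μ) ≤ ∫ t in (0:ℝ)..2, |gg c t| := by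
    intro x hx
    have h1 : (∫ y, ‖gg c (x + y)‖ ∂μ) = ∫ t in x..x + 1, |gg c t| := by
      rw [hμdef, MeasureTheory.integral_Icc_eq_integral_Ioc,
        ← intervalIntegral.integral_of_le (by norm_num : (0:ℝ) ≤ 1)]
      simp_rw [Real.norm_eq_abs]
      rw [intervalIntegral.integral_comp_add_left (fun t => |gg c t|) x, add_zero]
    rw [h1]
    apply intervalIntegral.integral_mono_interval hx.1 (by linarith) (by linarith [hx.2])
    · exact Filter.Eventually.of_forall fun t => abs_nonneg _
    · exact habs
  have hint : Integrable (fun p : ℝ × ℝ => gg c (p.1 + p.2)) (μ.prod μ) := by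
    refine (MeasureTheory.integrable_prod_iff hf_asm).mpr ⟨?_, ?_⟩
    · exact Filter.Eventually.of_forall fun x => hfib x
    · refine Integrable.mono' (g := fun _ => ∫ t in (0:ℝ)..2, |gg c t|) ?_ ?_ ?_
      · rw [hμdef]
        exact integrableOn_const
          (by rw [Real.volume_Icc]; exact ENNReal.ofReal_ne_top)
      · exact hf_asm.norm.integral_prod_right'
      · rw [hμdef]
        filter_upwards [MeasureTheory.ae_restrict_mem measurableSet_Icc] with x hx
        rw [Real.norm_eq_abs, abs_of_nonneg (integral_nonneg fun y => norm_nonneg _)]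
        exact hC x hx
  have inner_eval : ∀ x : ℝ,
      (∫ y, gg c (x + y) ∂(volume.restrict (Set.Icc (0:ℝ) 1)))
        = (2 / c) * phi (1 - c * x) - (2 / c) * phi (1 - c - c * x) := by
    intro x
    rw [MeasureTheory.integral_Icc_eq_integral_Ioc,
      ← intervalIntegral.integral_of_le (by norm_num : (0:ℝ) ≤ 1),
      intervalIntegral.integral_comp_add_left (gg c) x, add_zero,
      gg_integral c hc0 x (x + 1),
      show 1 - c * (x + 1) = 1 - c - c * x from by ring]
  have step1 : ∫ ω, Real.log ((1 - c * r ω - c * s ω) ^ 2) ∂ℙ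
      = ∫ ω, gg c (r ω + s ω) ∂ℙ := by
    apply integral_congr_ae
    apply Filter.Eventually.of_forall
    intro ω
    show Real.log ((1 - c * r ω - c * s ω) ^ 2) = gg c (r ω + s ω)
    unfold gg
    rw [Real.log_pow, show 1 - c * (r ω + s ω) = 1 - c * r ω - c * s ω from by ring]
    norm_num
  have step2 : ∫ ω, gg c (r ω + s ω) ∂ℙ
      = ∫ p, gg c (p.1 + p.2) ∂(μ.prod μ) := by
    rw [← hmap]
    exact (MeasureTheory.integral_map (hmr.prodMk hms).aemeasurable
      hgm.aestronglyMeasurable).symm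
  have step3 : ∫ p, gg c (p.1 + p.2) ∂(μ.prod μ)
      = ∫ x, (∫ y, gg c (x + y) ∂μ) ∂μ :=
    MeasureTheory.integral_prod _ hint
  have step4 : ∫ x, (∫ y, gg c (x + y) ∂μ) ∂μ
      = ∫ x in (0:ℝ)..1,
          ((2 / c) * phi (1 - c * x) - (2 / c) * phi (1 - c - c * x)) := by
    rw [hμdef, MeasureTheory.integral_Icc_eq_integral_Ioc,
      ← intervalIntegral.integral_of_le (by norm_num : (0:ℝ) ≤ 1)]
    exact intervalIntegral.integral_congr fun x _ => inner_eval x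
  have hφaff1 : Continuous fun x : ℝ => 1 - c * x :=
    continuous_const.sub (continuous_const.mul continuous_id)
  have hφaff2 : Continuous fun x : ℝ => 1 - c - c * x :=
    continuous_const.sub (continuous_const.mul continuous_id)
  have h₁ : IntervalIntegrable (fun x : ℝ => (2 / c) * phi (1 - c * x)) volume 0 1 :=
    (continuous_const.mul (continuous_phi.comp hφaff1)).intervalIntegrable 0 1
  have h₂ : IntervalIntegrable (fun x : ℝ => (2 / c) * phi (1 - c - c * x)) volume 0 1 :=
    (continuous_const.mul (continuous_phi.comp hφaff2)).intervalIntegrable 0 1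
  have step5 : ∫ x in (0:ℝ)..1,
        ((2 / c) * phi (1 - c * x) - (2 / c) * phi (1 - c - c * x))
      = (2 / c) * (c⁻¹ * (Phi 1 - Phi (1 - c)))
          - (2 / c) * (c⁻¹ * (Phi (1 - c) - Phi (1 - 2 * c))) := by
    rw [intervalIntegral.integral_sub h₁ h₂, intervalIntegral.integral_const_mul,
      intervalIntegral.integral_const_mul,
      intervalIntegral.integral_comp_sub_mul phi hc0 1,
      intervalIntegral.integral_comp_sub_mul phi hc0 (1 - c),
      mul_one, mul_zero, sub_zero, sub_zero, integral_phi, integral_phi,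
      show (1:ℝ) - c - c = 1 - 2 * c from by ring, smul_eq_mul, smul_eq_mul]
  rw [step1, step2, step3, step4, step5]
  unfold Phi
  rw [Real.log_pow, Real.log_pow, Real.log_one]
  push_cast
  field_simp
  ring
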